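/- arXiv:2605.24348 — 4 statements merged into one kernel-verified Lean document; each statement's English description precedes it below -/
import Mathlib

section
/- Suppose G = G₁ ∨ G₂ is the one-point union of edge-labeled graphs (G₁,α₁) and (G₂,α₂) at a vertex v. Then the restriction map ρ₁: Spl_R(G,α) → Spl_R(G₁,α₁), which restricts a spline to the vertices of G₁, is a well-defined surjective R-module homomorphism. -/
/-- An edge-labeled graph: a finite (multi)graph together with an assignment
of an ideal of `R` to each edge. -/
structure ELGraph (R : Type) [CommRing R] where
  V : Type
  E : Type
  [fV : Fintype V]
  [fE : Fintype E]
  [dV : DecidableEq V]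
  ends : E → V × V
  lab : E → Ideal R

attribute [instance] ELGraph.fV ELGraph.fE ELGraph.dV

variable {R : Type} [CommRing R]

/-- `p` is a generalized spline on `(G, α)`. -/
def ELGraph.IsSpline (G : ELGraph R) (p : G.V → R) : Prop :=
  ∀ e : G.E, p (G.ends e).1 - p (G.ends e).2 ∈ G.lab e

/-- The module of generalized splines on `(G, α)`, as a submodule of `⊕_{v} R`. -/
def splSub (G : ELGraph R) : Submodule R (G.V → R) where
  carrier := {p | G.IsSpline p}
  add_mem' := by
    intro p q hp hq e
    simpa [ELGraph.IsSpline, add_sub_add_comm] using Ideal.add_mem _ (hp e) (hq e)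
  zero_mem' := by intro e; simp
  smul_mem' := by
    intro c p hp e
    simpa [ELGraph.IsSpline, mul_sub] using Submodule.smul_mem _ c (hp e)

/-- The natural inclusion of the vertices of `G₂` into the one-point union
`G₁ ∨_v G₂`, sending `v₂` to (the image of) `v₁`. -/
def wedgeInc (G₁ G₂ : ELGraph R) (v₁ : G₁.V) (v₂ : G₂.V) (w : G₂.V) :
    G₁.V ⊕ {w : G₂.V // w ≠ v₂} :=
  if h : w = v₂ then Sum.inl v₁ else Sum.inr ⟨w, h⟩

/-- The one-point union `G₁ ∨_v G₂` of edge-labeled graphs, identifying `v₁ ∈ G₁`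
with `v₂ ∈ G₂`: vertex set `V_{G₁} ⊔ (V_{G₂} ∖ {v₂})`, edge set `E_{G₁} ⊔ E_{G₂}`,
labels restricting to the original labels on each factor. -/
def wedge (G₁ G₂ : ELGraph R) (v₁ : G₁.V) (v₂ : G₂.V) : ELGraph R where
  V := G₁.V ⊕ {w : G₂.V // w ≠ v₂}
  E := G₁.E ⊕ G₂.E
  ends := fun e =>
    match e with
    | .inl e => (Sum.inl (G₁.ends e).1, Sum.inl (G₁.ends e).2)
    | .inr e => (wedgeInc G₁ G₂ v₁ v₂ (G₂.ends e).1, wedgeInc G₁ G₂ v₁ v₂ (G₂.ends e).2)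
  lab := Sum.elim G₁.lab G₂.lab

/-- Pulling a spline `p` on `G₁` back along this retraction extends it by the constant `p v₁`
on `G₂`: every edge of `G₂` is collapsed to a point, so its condition holds trivially. -/
def wedgeRetract (G₁ G₂ : ELGraph R) (v₁ : G₁.V) (v₂ : G₂.V) : (wedge G₁ G₂ v₁ v₂).V → G₁.V :=
  Sum.elim id fun _ => v₁

section Wedge

variable (G₁ G₂ : ELGraph R) (v₁ : G₁.V) (v₂ : G₂.V)

theorem wedgeRetract_wedgeInc (w : G₂.V) :
    wedgeRetract G₁ G₂ v₁ v₂ (wedgeInc G₁ G₂ v₁ v₂ w) = v₁ := by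
  unfold wedgeInc
  split <;> rfl

variable {G₁ G₂ v₁ v₂}

theorem ELGraph.IsSpline.comp_wedgeRetract {p : G₁.V → R} (hp : G₁.IsSpline p) :
    (wedge G₁ G₂ v₁ v₂).IsSpline (p ∘ wedgeRetract G₁ G₂ v₁ v₂) := by
  rintro (e | e)
  · exact hp e
  · show p (wedgeRetract G₁ G₂ v₁ v₂ (wedgeInc G₁ G₂ v₁ v₂ (G₂.ends e).1)) -
      p (wedgeRetract G₁ G₂ v₁ v₂ (wedgeInc G₁ G₂ v₁ v₂ (G₂.ends e).2)) ∈ G₂.lab e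
    rw [wedgeRetract_wedgeInc, wedgeRetract_wedgeInc, sub_self]
    exact zero_mem _

variable (G₁ G₂ v₁ v₂)

def wedgeRestrict : splSub (wedge G₁ G₂ v₁ v₂) →ₗ[R] splSub G₁ :=
  (LinearMap.funLeft R R (Sum.inl : G₁.V → (wedge G₁ G₂ v₁ v₂).V)).restrict
    fun _ hp e => hp (Sum.inl e)

def wedgeExtend : splSub G₁ →ₗ[R] splSub (wedge G₁ G₂ v₁ v₂) :=
  (LinearMap.funLeft R R (wedgeRetract G₁ G₂ v₁ v₂)).restrict
    fun _ hq => hq.comp_wedgeRetract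

theorem wedgeRestrict_apply (p : splSub (wedge G₁ G₂ v₁ v₂)) (a : G₁.V) :
    (wedgeRestrict G₁ G₂ v₁ v₂ p : G₁.V → R) a = (p : (wedge G₁ G₂ v₁ v₂).V → R) (Sum.inl a) :=
  rfl

theorem wedgeRestrict_comp_wedgeExtend :
    wedgeRestrict G₁ G₂ v₁ v₂ ∘ₗ wedgeExtend G₁ G₂ v₁ v₂ = LinearMap.id :=
  rfl

theorem wedgeRestrict_surjective : Function.Surjective (wedgeRestrict G₁ G₂ v₁ v₂) :=
  Function.RightInverse.surjective
    (LinearMap.congr_fun (wedgeRestrict_comp_wedgeExtend G₁ G₂ v₁ v₂))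

end Wedge

/-- for a one-point union `G = G₁ ∨_v G₂`, restriction of splines to
the vertices of `G₁` is a well-defined surjective `R`-module homomorphism
`Spl_R(G,α) → Spl_R(G₁,α₁)`. -/
theorem wedge_restriction_surjective (G₁ G₂ : ELGraph R) (v₁ : G₁.V) (v₂ : G₂.V) :
    ∃ ρ : splSub (wedge G₁ G₂ v₁ v₂) →ₗ[R] splSub G₁,
      (∀ p : splSub (wedge G₁ G₂ v₁ v₂), ∀ a : G₁.V,
        (ρ p : G₁.V → R) a = (p : (wedge G₁ G₂ v₁ v₂).V → R) (Sum.inl a)) ∧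
      Function.Surjective ρ :=
  ⟨wedgeRestrict G₁ G₂ v₁ v₂, wedgeRestrict_apply G₁ G₂ v₁ v₂,
    wedgeRestrict_surjective G₁ G₂ v₁ v₂⟩
end

section
/- Suppose G = G₁ ∨ G₂ is a one-point union of edge-labeled graphs at vertex v. Then the kernel of the restriction map ρ₁: Spl_R(G,α) → Spl_R(G₁,α₁) is isomorphic to Spl_R(G₂,α₂;v), the module of splines on G₂ vanishing at v; explicitly, the kernel consists exactly of splines vanishing on all of V_{G₁}, extended by splines on G₂ vanishing at v. -/
variable {R : Type} [CommRing R]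

/-- The submodule of splines vanishing on a set `U` of vertices. -/
def splSubBased (G : ELGraph R) (U : Set G.V) : Submodule R (G.V → R) where
  carrier := {p | G.IsSpline p ∧ ∀ u ∈ U, p u = 0}
  add_mem' := by
    rintro p q ⟨hp, hp0⟩ ⟨hq, hq0⟩
    refine ⟨fun e => ?_, fun u hu => by simp [hp0 u hu, hq0 u hu]⟩
    simpa [ELGraph.IsSpline, add_sub_add_comm] using Ideal.add_mem _ (hp e) (hq e)
  zero_mem' := ⟨by intro e; simp, by intro u _; simp⟩
  smul_mem' := by
    rintro c p ⟨hp, hp0⟩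
    refine ⟨fun e => ?_, fun u hu => by simp [hp0 u hu]⟩
    simpa [ELGraph.IsSpline, mul_sub] using Submodule.smul_mem _ c (hp e)

/-! Restricting along `wedgeInc` turns a spline on `G₁ ∨_v G₂` that vanishes on `G₁` into a
spline on `G₂` vanishing at `v`, since the edges of `G₂` keep their labels. Conversely such a
spline extends by zero across `G₁`, whose edges impose nothing on the zero function; the two
constructions are mutually inverse and linear. -/

section Wedge

variable (G₁ G₂ : ELGraph R) (v₁ : G₁.V) (v₂ : G₂.V)

@[simp]
lemma wedgeInc_self : wedgeInc G₁ G₂ v₁ v₂ v₂ = Sum.inl v₁ :=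
  dif_pos rfl

lemma wedgeInc_of_ne {w : G₂.V} (hw : w ≠ v₂) : wedgeInc G₁ G₂ v₁ v₂ w = Sum.inr ⟨w, hw⟩ :=
  dif_neg hw

def wedgeExtendByZero (q : G₂.V → R) : (wedge G₁ G₂ v₁ v₂).V → R :=
  Sum.elim 0 fun w => q w.1

variable {G₁ G₂ v₁ v₂}

lemma wedgeExtendByZero_wedgeInc {q : G₂.V → R} (hq : q v₂ = 0) (w : G₂.V) :
    wedgeExtendByZero G₁ G₂ v₁ v₂ q (wedgeInc G₁ G₂ v₁ v₂ w) = q w := by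
  by_cases hw : w = v₂
  · subst hw
    simp [wedgeExtendByZero, hq]
  · simp [wedgeInc_of_ne G₁ G₂ v₁ v₂ hw, wedgeExtendByZero]

lemma wedgeExtendByZero_comp_wedgeInc {p : (wedge G₁ G₂ v₁ v₂).V → R}
    (hp : ∀ a : G₁.V, p (Sum.inl a) = 0) :
    wedgeExtendByZero G₁ G₂ v₁ v₂ (p ∘ wedgeInc G₁ G₂ v₁ v₂) = p := by
  ext (a | ⟨w, hw⟩)
  · exact (hp a).symm
  · exact congrArg p (wedgeInc_of_ne G₁ G₂ v₁ v₂ hw)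

lemma isSpline_comp_wedgeInc {p : (wedge G₁ G₂ v₁ v₂).V → R}
    (hp : (wedge G₁ G₂ v₁ v₂).IsSpline p) : G₂.IsSpline (p ∘ wedgeInc G₁ G₂ v₁ v₂) :=
  fun e => hp (Sum.inr e)

lemma isSpline_wedgeExtendByZero {q : G₂.V → R} (hq : G₂.IsSpline q) (hq0 : q v₂ = 0) :
    (wedge G₁ G₂ v₁ v₂).IsSpline (wedgeExtendByZero G₁ G₂ v₁ v₂ q)
  | .inl e => by simp [wedgeExtendByZero, wedge]
  | .inr e => by simpa [wedge, wedgeExtendByZero_wedgeInc hq0] using hq e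

lemma comp_wedgeInc_mem {p : (wedge G₁ G₂ v₁ v₂).V → R}
    (hp : p ∈ splSubBased (wedge G₁ G₂ v₁ v₂) {x | ∃ a : G₁.V, x = Sum.inl a}) :
    p ∘ wedgeInc G₁ G₂ v₁ v₂ ∈ splSubBased G₂ {v₂} := by
  refine ⟨isSpline_comp_wedgeInc hp.1, fun u hu => ?_⟩
  rw [Set.mem_singleton_iff.mp hu]
  exact (congrArg p (wedgeInc_self G₁ G₂ v₁ v₂)).trans (hp.2 _ ⟨v₁, rfl⟩)

lemma wedgeExtendByZero_mem {q : G₂.V → R} (hq : q ∈ splSubBased G₂ {v₂}) :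
    wedgeExtendByZero G₁ G₂ v₁ v₂ q ∈
      splSubBased (wedge G₁ G₂ v₁ v₂) {x | ∃ a : G₁.V, x = Sum.inl a} := by
  refine ⟨isSpline_wedgeExtendByZero hq.1 (hq.2 v₂ rfl), ?_⟩
  rintro u ⟨a, rfl⟩
  rfl

variable (G₁ G₂ v₁ v₂)

def wedgeKernelEquiv :
    splSubBased (wedge G₁ G₂ v₁ v₂) {x | ∃ a : G₁.V, x = Sum.inl a} ≃ₗ[R] splSubBased G₂ {v₂} where
  toFun p := ⟨p.1 ∘ wedgeInc G₁ G₂ v₁ v₂, comp_wedgeInc_mem p.2⟩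
  map_add' _ _ := rfl
  map_smul' _ _ := rfl
  invFun q := ⟨wedgeExtendByZero G₁ G₂ v₁ v₂ q.1, wedgeExtendByZero_mem q.2⟩
  left_inv p := Subtype.ext <| wedgeExtendByZero_comp_wedgeInc fun a => p.2.2 _ ⟨a, rfl⟩
  right_inv q := Subtype.ext <| funext <| wedgeExtendByZero_wedgeInc (q.2.2 v₂ rfl)

end Wedge

/-- for a one-point union `G = G₁ ∨_v G₂`, the kernel of the
restriction map `ρ₁ : Spl_R(G,α) → Spl_R(G₁,α₁)` consists exactly of the splines
vanishing on all of `V_{G₁}`, and (via restriction along the inclusion of `G₂`)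
it is isomorphic as an `R`-module to `Spl_R(G₂,α₂;v)`, the splines on `G₂`
vanishing at `v`. -/
theorem wedge_restriction_kernel (G₁ G₂ : ELGraph R) (v₁ : G₁.V) (v₂ : G₂.V) :
    (∀ p : (wedge G₁ G₂ v₁ v₂).V → R, p ∈ splSub (wedge G₁ G₂ v₁ v₂) →
      ((∀ a : G₁.V, p (Sum.inl a) = 0) ↔
        p ∈ splSubBased (wedge G₁ G₂ v₁ v₂) {x | ∃ a : G₁.V, x = Sum.inl a})) ∧
    ∃ e : splSubBased (wedge G₁ G₂ v₁ v₂) {x | ∃ a : G₁.V, x = Sum.inl a}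
          ≃ₗ[R] splSubBased G₂ {v₂},
      ∀ p, ∀ w : G₂.V,
        (e p : G₂.V → R) w =
          (p : (wedge G₁ G₂ v₁ v₂).V → R) (wedgeInc G₁ G₂ v₁ v₂ w) := by
  refine ⟨fun p hp => ⟨fun h => ⟨hp, ?_⟩, fun h a => h.2 _ ⟨a, rfl⟩⟩,
    wedgeKernelEquiv G₁ G₂ v₁ v₂, fun _ _ => rfl⟩
  rintro _ ⟨a, rfl⟩
  exact h a
end

section
/- Let G be a connected graph containing a path P = v₀v₁⋯v_k such that v₁,…,v_{k−1} all have degree two in G, and let G' be obtained from G by replacing the path with a single edge v₀v_k. Define the edge-labeling α' on G' to agree with α away from the new edge, and set α'(v₀v_k) = α(v₀v₁) + α(v₁v₂) + ⋯ + α(v_{k−1}v_k) (the ideal sum). Then the restriction map ρ: Spl_R(G,α) → Spl_R(G',α'), restricting splines to V_G ∖ {v₁,…,v_{k−1}}, is a well-defined surjective R-module homomorphism. -/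
variable {R : Type} [CommRing R]

/-- The degree of a vertex (loops count twice). -/
noncomputable def ELGraph.degree (G : ELGraph R) (w : G.V) : ℕ :=
  (Finset.univ.filter fun e : G.E => (G.ends e).1 = w).card +
  (Finset.univ.filter fun e : G.E => (G.ends e).2 = w).card

section PathContraction

variable (G : ELGraph R) (k : ℕ) (v : Fin (k + 1) → G.V) (e : Fin k → G.E)

/-- The interior vertices `v₁, …, v_{k−1}` of the path. -/
def pathInterior : Set G.V :=
  {w | ∃ j : Fin (k + 1), (j : ℕ) ≠ 0 ∧ (j : ℕ) ≠ k ∧ w = v j}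

/-- The spline condition for the contracted graph `G'`, in which the path
`v₀v₁⋯v_k` has been replaced by a single edge `v₀v_k` labeled by the ideal sum
`α(v₀v₁) + ⋯ + α(v_{k−1}v_k)`, all other edges and labels being unchanged. -/
def SplineCond' (q : G.V → R) : Prop :=
  (∀ f : G.E, (∀ i : Fin k, f ≠ e i) →
    q (G.ends f).1 - q (G.ends f).2 ∈ G.lab f) ∧
  q (v 0) - q (v (Fin.last k)) ∈ ∑ i : Fin k, G.lab (e i)

theorem Ideal.mem_sum_iff_exists_sum {R ι : Type*} [CommSemiring R] (s : Finset ι)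
    (I : ι → Ideal R) (x : R) :
    x ∈ ∑ i ∈ s, I i ↔ ∃ μ : ∀ i, I i, ∑ i ∈ s, (μ i : R) = x := by
  rw [Ideal.sum_eq_sup, Finset.sup_eq_iSup, Submodule.mem_iSup_finset_iff_exists_sum]

theorem Fin.sum_univ_castSucc_sub_succ {M : Type*} [AddCommGroup M] {n : ℕ}
    (f : Fin (n + 1) → M) :
    ∑ i : Fin n, (f i.castSucc - f i.succ) = f 0 - f (Fin.last n) := by
  induction n with
  | zero => simp
  | succ n ih =>
    rw [Fin.sum_univ_castSucc]
    simp only [Fin.succ_castSucc, Fin.succ_last]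
    rw [ih (fun j => f j.castSucc)]
    simp only [Fin.castSucc_zero]
    abel

theorem Fin.exists_castSucc_sub_succ_eq {M : Type*} [AddCommGroup M] {n : ℕ} (a b : M)
    (y : Fin n → M) (hy : ∑ i, y i = a - b) :
    ∃ s : Fin (n + 1) → M,
      s 0 = a ∧ s (Fin.last n) = b ∧ ∀ i : Fin n, s i.castSucc - s i.succ = y i := by
  set s : Fin (n + 1) → M := fun j => a - Fin.partialSum y j
  have hstep : ∀ i : Fin n, s i.castSucc - s i.succ = y i := fun i => by
    simp only [s, Fin.partialSum_succ]
    abel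
  have hzero : s 0 = a := by simp [s, Fin.partialSum_zero]
  refine ⟨s, hzero, ?_, hstep⟩
  have := Fin.sum_univ_castSucc_sub_succ s
  simp only [hstep, hy, hzero] at this
  rw [sub_right_inj] at this
  exact this.symm

namespace ELGraph

theorem sub_mem_lab_iff_of_ends {G : ELGraph R} {f : G.E} {a b : G.V}
    (hf : G.ends f = (a, b) ∨ G.ends f = (b, a)) (p : G.V → R) :
    p (G.ends f).1 - p (G.ends f).2 ∈ G.lab f ↔ p a - p b ∈ G.lab f := by
  rcases hf with h | h <;> simp [h, sub_mem_comm_iff]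

theorem card_incident_le_degree (G : ELGraph R) (w : G.V) :
    (Finset.univ.filter fun f : G.E => (G.ends f).1 = w ∨ (G.ends f).2 = w).card ≤
      G.degree w := by
  classical
  rw [Finset.filter_or]
  exact Finset.card_union_le _ _

theorem eq_or_eq_of_degree_eq_two {G : ELGraph R} {w : G.V} (hw : G.degree w = 2)
    {f₁ f₂ f : G.E} (h₁₂ : f₁ ≠ f₂)
    (h₁ : (G.ends f₁).1 = w ∨ (G.ends f₁).2 = w) (h₂ : (G.ends f₂).1 = w ∨ (G.ends f₂).2 = w)
    (hf : (G.ends f).1 = w ∨ (G.ends f).2 = w) :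
    f = f₁ ∨ f = f₂ := by
  classical
  by_contra! hne
  have hcard : ({f, f₁, f₂} : Finset G.E).card = 3 := by
    rw [Finset.card_insert_of_notMem (by simp [hne.1, hne.2]),
      Finset.card_pair h₁₂]
  have hsub : ({f, f₁, f₂} : Finset G.E) ⊆
      Finset.univ.filter fun g : G.E => (G.ends g).1 = w ∨ (G.ends g).2 = w := by
    intro g hg
    simp only [Finset.mem_insert, Finset.mem_singleton] at hg
    rcases hg with rfl | rfl | rfl <;> simpa
  have := (Finset.card_le_card hsub).trans (G.card_incident_le_degree w)
  omega

end ELGraph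

theorem exists_eq_of_incident_pathInterior (he : Function.Injective e)
    (hpath : ∀ i : Fin k,
      G.ends (e i) = (v i.castSucc, v i.succ) ∨ G.ends (e i) = (v i.succ, v i.castSucc))
    (hdeg : ∀ j : Fin (k + 1), (j : ℕ) ≠ 0 → (j : ℕ) ≠ k → G.degree (v j) = 2)
    {w : G.V} (hw : w ∈ pathInterior G k v) {f : G.E}
    (hf : (G.ends f).1 = w ∨ (G.ends f).2 = w) : ∃ i, f = e i := by
  obtain ⟨j, hj0, hjk, rfl⟩ := hw
  have hjk' : (j : ℕ) < k := by omega
  let i₁ : Fin k := ⟨j - 1, by omega⟩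
  let i₂ : Fin k := ⟨j, hjk'⟩
  have hi₁ : i₁.succ = j := Fin.ext (by simp [i₁]; omega)
  have hi₂ : i₂.castSucc = j := Fin.ext rfl
  have h₁ : (G.ends (e i₁)).1 = v j ∨ (G.ends (e i₁)).2 = v j := by
    rcases hpath i₁ with h | h <;> simp [h, hi₁]
  have h₂ : (G.ends (e i₂)).1 = v j ∨ (G.ends (e i₂)).2 = v j := by
    rcases hpath i₂ with h | h <;> simp [h, hi₂]
  have h₁₂ : e i₁ ≠ e i₂ := he.ne fun h => by simp [i₁, i₂, Fin.ext_iff] at h; omega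
  rcases ELGraph.eq_or_eq_of_degree_eq_two (hdeg j hj0 hjk) h₁₂ h₁ h₂ hf with h | h
  exacts [⟨i₁, h⟩, ⟨i₂, h⟩]

theorem splineCond'_of_isSpline (hpath : ∀ i : Fin k,
      G.ends (e i) = (v i.castSucc, v i.succ) ∨ G.ends (e i) = (v i.succ, v i.castSucc))
    {p : G.V → R} (hp : G.IsSpline p) : SplineCond' G k v e p := by
  refine ⟨fun f _ => hp f, ?_⟩
  rw [← Fin.sum_univ_castSucc_sub_succ (fun j => p (v j)), Ideal.mem_sum_iff_exists_sum]
  exact ⟨fun i => ⟨_, (ELGraph.sub_mem_lab_iff_of_ends (hpath i) p).1 (hp (e i))⟩, rfl⟩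

theorem exists_isSpline_extension_of_splineCond' (hv : Function.Injective v)
    (he : Function.Injective e)
    (hpath : ∀ i : Fin k,
      G.ends (e i) = (v i.castSucc, v i.succ) ∨ G.ends (e i) = (v i.succ, v i.castSucc))
    (hdeg : ∀ j : Fin (k + 1), (j : ℕ) ≠ 0 → (j : ℕ) ≠ k → G.degree (v j) = 2)
    {q : G.V → R} (hq : SplineCond' G k v e q) :
    ∃ p : G.V → R, G.IsSpline p ∧ ∀ w : G.V, w ∉ pathInterior G k v → p w = q w := by
  obtain ⟨hoff, hsum⟩ := hq
  obtain ⟨y, hy⟩ := (Ideal.mem_sum_iff_exists_sum _ _ _).1 hsum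
  obtain ⟨s, hs0, hslast, hstep⟩ := Fin.exists_castSucc_sub_succ_eq _ _ _ hy
  classical
  let p : G.V → R := Function.extend v s q
  have hpv : ∀ j, p (v j) = s j := hv.extend_apply s q
  have hpq : ∀ w, w ∉ pathInterior G k v → p w = q w := by
    intro w hw
    by_cases hrange : ∃ j, v j = w
    · obtain ⟨j, rfl⟩ := hrange
      have hj : j = 0 ∨ j = Fin.last k := by
        by_contra! h
        exact hw ⟨j, Fin.val_ne_iff.2 h.1, Fin.val_ne_iff.2 h.2, rfl⟩
      rcases hj with rfl | rfl
      exacts [(hpv 0).trans hs0, (hpv _).trans hslast]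
    · exact Function.extend_apply' s q w hrange
  refine ⟨p, fun f => ?_, hpq⟩
  by_cases hpathEdge : ∃ i, f = e i
  · obtain ⟨i, rfl⟩ := hpathEdge
    rw [ELGraph.sub_mem_lab_iff_of_ends (hpath i), hpv, hpv, hstep]
    exact (y i).2
  · push Not at hpathEdge
    have hends : ∀ w, ((G.ends f).1 = w ∨ (G.ends f).2 = w) → p w = q w := fun w hf =>
      hpq w fun hw => by
        obtain ⟨i, rfl⟩ := exists_eq_of_incident_pathInterior G k v e he hpath hdeg hw hf
        exact hpathEdge i rfl
    rw [hends _ (Or.inl rfl), hends _ (Or.inr rfl)]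
    exact hoff f hpathEdge

theorem path_contraction_restriction_surjective
    (hv : Function.Injective v) (he : Function.Injective e)
    (hpath : ∀ i : Fin k,
      G.ends (e i) = (v i.castSucc, v i.succ) ∨ G.ends (e i) = (v i.succ, v i.castSucc))
    (hdeg : ∀ j : Fin (k + 1), (j : ℕ) ≠ 0 → (j : ℕ) ≠ k → G.degree (v j) = 2) :
    (∀ p : G.V → R, G.IsSpline p → SplineCond' G k v e p) ∧
    (∀ q : G.V → R, SplineCond' G k v e q →
      ∃ p : G.V → R, G.IsSpline p ∧ ∀ w : G.V, w ∉ pathInterior G k v → p w = q w) :=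
  ⟨fun _ => splineCond'_of_isSpline G k v e hpath,
    fun _ => exists_isSpline_extension_of_splineCond' G k v e hv he hpath hdeg⟩

end PathContraction
end

section
/- Let k be a field and R = Z/pZ for a prime p (viewed as a field). Let (T,α) be an edge-labeled tree where each edge is labeled either by the zero ideal or by the full ring R. Then the dimension of Spl_R(T,α) as an R-vector space equals |E_T| − n₀ + 1, where n₀ is the number of edges labeled by the zero ideal. -/
variable {R : Type} [CommRing R]

/-- `G` is connected: any two vertices are joined by a walk. -/
def ELGraph.Connected (G : ELGraph R) : Prop :=
  ∀ a b : G.V, Relation.ReflTransGen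
    (fun x y => ∃ e : G.E, G.ends e = (x, y) ∨ G.ends e = (y, x)) a b

/-!
The coboundary map `q ↦ (e ↦ q(head e) - q(tail e))` from vertex values to edge values has, on a
connected graph, exactly the constant functions as kernel. On a tree (`|V| = |E| + 1`) rank–nullity
then forces it to be surjective, so its composite with the restriction to the zero-labelled edges
is surjective too. The splines are the kernel of that composite, of dimension `|V| - n₀`.
-/

namespace ELGraph

variable (G : ELGraph R)

def coboundary : (G.V → R) →ₗ[R] (G.E → R) where
  toFun q e := q (G.ends e).1 - q (G.ends e).2
  map_add' q q' := by funext e; simp only [Pi.add_apply]; ring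
  map_smul' c q := by funext e; simp [mul_sub]

@[simp]
lemma coboundary_apply (q : G.V → R) (e : G.E) :
    G.coboundary q e = q (G.ends e).1 - q (G.ends e).2 := rfl

def zeroEdgeCoboundary : (G.V → R) →ₗ[R] ({e : G.E // G.lab e = ⊥} → R) :=
  (LinearMap.funLeft R R Subtype.val).comp G.coboundary

lemma splSub_eq_ker_zeroEdgeCoboundary (hlab : ∀ e : G.E, G.lab e = ⊥ ∨ G.lab e = ⊤) :
    splSub G = LinearMap.ker G.zeroEdgeCoboundary := by
  ext q
  simp only [LinearMap.mem_ker, funext_iff, zeroEdgeCoboundary, LinearMap.comp_apply,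
    LinearMap.funLeft_apply, coboundary_apply, Pi.zero_apply, Subtype.forall]
  refine ⟨fun hq e he => by simpa [he] using hq e, fun hq e => ?_⟩
  rcases hlab e with he | he
  · simpa [he] using hq e he
  · simp [he]

variable {G} in
lemma Connected.apply_eq_of_coboundary_eq_zero (hG : G.Connected) {q : G.V → R}
    (hq : G.coboundary q = 0) (a b : G.V) : q a = q b := by
  have hedge : ∀ e, q (G.ends e).1 = q (G.ends e).2 := fun e =>
    sub_eq_zero.mp (congrFun hq e)
  induction hG a b with
  | refl => rfl
  | tail _ hxy ih =>
    obtain ⟨e, he | he⟩ := hxy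
    · simpa [he, ih] using hedge e
    · simpa [he, ih] using (hedge e).symm

variable {G} in
lemma Connected.ker_coboundary (hG : G.Connected) [Nonempty G.V] :
    LinearMap.ker G.coboundary = R ∙ (fun _ => 1) := by
  ext q
  rw [LinearMap.mem_ker, Submodule.mem_span_singleton]
  constructor
  · intro hq
    obtain ⟨v₀⟩ := ‹Nonempty G.V›
    exact ⟨q v₀, funext fun v => by simp [hG.apply_eq_of_coboundary_eq_zero hq v₀ v]⟩
  · rintro ⟨c, rfl⟩
    ext e
    simp

variable {K : Type} [Field K] (G : ELGraph K)

lemma coboundary_surjective (hG : G.Connected)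
    (hcard : Fintype.card G.V = Fintype.card G.E + 1) :
    Function.Surjective G.coboundary := by
  have : Nonempty G.V := Fintype.card_pos_iff.mp (by omega)
  have hker : Module.finrank K (LinearMap.ker G.coboundary) = 1 := by
    rw [hG.ker_coboundary, finrank_span_singleton (by simp [funext_iff])]
  have hrank := LinearMap.finrank_range_add_finrank_ker G.coboundary
  rw [hker, Module.finrank_pi] at hrank
  rw [← LinearMap.range_eq_top]
  apply Submodule.eq_top_of_finrank_eq
  rw [Module.finrank_pi]
  omega

lemma finrank_splSub_add_card_zeroEdges (hG : G.Connected)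
    (hcard : Fintype.card G.V = Fintype.card G.E + 1)
    (hlab : ∀ e : G.E, G.lab e = ⊥ ∨ G.lab e = ⊤) [DecidablePred fun e : G.E => G.lab e = ⊥] :
    Module.finrank K (splSub G) + Fintype.card {e : G.E // G.lab e = ⊥} =
      Fintype.card G.V := by
  have hsurj : Function.Surjective G.zeroEdgeCoboundary :=
    (LinearMap.funLeft_surjective_of_injective K K _ Subtype.val_injective).comp
      (G.coboundary_surjective hG hcard)
  have hrank := LinearMap.finrank_range_add_finrank_ker G.zeroEdgeCoboundary
  rw [LinearMap.range_eq_top.mpr hsurj, finrank_top, Module.finrank_pi, Module.finrank_pi,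
    ← G.splSub_eq_ker_zeroEdgeCoboundary hlab] at hrank
  omega

end ELGraph

open scoped Classical in
/-- for the field `R = ℤ/pℤ` and an edge-labeled tree `(T,α)` whose
edges are labeled by the zero ideal or the full ring, the dimension of
`Spl_R(T,α)` as an `R`-vector space is `|E_T| − n₀ + 1`, where `n₀` is the number
of edges labeled by the zero ideal. -/
theorem tree_spline_dimension (p : ℕ) [Fact p.Prime]
    (G : ELGraph (ZMod p))
    (htree : G.Connected ∧ Fintype.card G.V = Fintype.card G.E + 1)
    (hlab : ∀ e : G.E, G.lab e = ⊥ ∨ G.lab e = ⊤) :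
    Module.finrank (ZMod p) (splSub G) =
      Fintype.card G.E - Fintype.card {e : G.E // G.lab e = ⊥} + 1 := by
  obtain ⟨hconn, hcard⟩ := htree
  have hdim := G.finrank_splSub_add_card_zeroEdges hconn hcard hlab
  have hzero_le : Fintype.card {e : G.E // G.lab e = ⊥} ≤ Fintype.card G.E :=
    Fintype.card_subtype_le _
  omega
end
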